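/- Let G : ℝ^p × ℝ^m → ℝ^n be path differentiable with conservative Jacobian J_G : ℝ^{p+m} ⇉ ℝ^{n×(p+m)}. For fixed x ∈ ℝ^p, define Π_y J_G(x,y) = {M₂ ∈ ℝ^{n×m} : ∃ M₁ ∈ ℝ^{n×p}, (M₁ M₂) ∈ J_G(x,y)} (block notation). Then for every x, the set-valued map y ⇉ Π_y J_G(x,y) is a conservative Jacobian for y ↦ G(x,y). -/

import Mathlib

open MeasureTheory Set

/-- `D` is a conservative Jacobian for `f : ℝ^d → ℝ^n`: nonempty-valued, locally
bounded, closed graph, and chain rule along absolutely continuous curves. -/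
def IsConservativeJacobian {n d : ℕ}
    (D : (Fin d → ℝ) → Set (Matrix (Fin n) (Fin d) ℝ))
    (f : (Fin d → ℝ) → (Fin n → ℝ)) : Prop :=
  (∀ x, (D x).Nonempty) ∧
  (∀ x : Fin d → ℝ, ∃ ε > (0 : ℝ), ∃ C : ℝ,
    ∀ y, dist y x < ε → ∀ V ∈ D y, ∀ i j, |V i j| ≤ C) ∧
  IsClosed {q : (Fin d → ℝ) × Matrix (Fin n) (Fin d) ℝ | q.2 ∈ D q.1} ∧
  (∀ γ γ' : ℝ → (Fin d → ℝ),
    IntegrableOn γ' (Icc (0 : ℝ) 1) →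
    (∀ t ∈ Icc (0 : ℝ) 1, γ t - γ 0 = ∫ s in (0 : ℝ)..t, γ' s) →
    ∀ᵐ t ∂(volume.restrict (Icc (0 : ℝ) 1)),
      ∀ V ∈ D (γ t), HasDerivAt (fun s => f (γ s)) (V.mulVec (γ' t)) t)

/-! The partial map `y ↦ G (x, y)` is `G` precomposed with the affine embedding
`y ↦ (x, 0) + E y`, where `E = [0; I]`, and `V E` is the right block of `V`. So it suffices that
conservative Jacobians are stable under precomposition with affine maps `y ↦ a + B y`, the new
Jacobian being `{V B | V ∈ D (a + B y)}`. The chain rule transfers because `a + B γ` is absolutely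
continuous with derivative `B γ'`. The graph stays closed because, near each point, it is the
continuous image of a compact piece of the old graph: local boundedness confines the matrices
to a compact box. -/

open Filter Topology
open scoped Matrix

theorem isClosed_setOf_mem_image {X Y Z : Type*} [TopologicalSpace X] [LocallyCompactSpace X]
    [T2Space X] [TopologicalSpace Y] [TopologicalSpace Z] [T2Space Z] {D : X → Set Y}
    (hD : IsClosed {q : X × Y | q.2 ∈ D q.1})
    (hbdd : ∀ x, ∃ K, IsCompact K ∧ ∀ᶠ x' in 𝓝 x, D x' ⊆ K) {Φ : Y → Z} (hΦ : Continuous Φ) :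
    IsClosed {q : X × Z | q.2 ∈ Φ '' D q.1} := by
  refine isClosed_of_closure_subset fun q hq => ?_
  obtain ⟨K, hK, hDK⟩ := hbdd q.1
  obtain ⟨s, hs, hsK, hsc⟩ := local_compact_nhds hDK
  set S := {q : X × Y | q.2 ∈ D q.1} ∩ s ×ˢ K
  have hS : IsClosed (Prod.map id Φ '' S) :=
    (((hsc.prod hK).inter_left hD).image (continuous_id.prodMap hΦ)).isClosed
  have hlocal : {q : X × Z | q.2 ∈ Φ '' D q.1} ∩ s ×ˢ univ ⊆ Prod.map id Φ '' S := by
    rintro ⟨x, _⟩ ⟨⟨y, hy, rfl⟩, hx, -⟩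
    exact ⟨(x, y), ⟨hy, hx, hsK hx hy⟩, rfl⟩
  have hq' : q ∈ closure ({q : X × Z | q.2 ∈ Φ '' D q.1} ∩ s ×ˢ univ) := by
    rw [mem_closure_iff_nhds] at hq ⊢
    intro t ht
    obtain ⟨q', ⟨hq't, hq's⟩, hq'D⟩ := hq _ (inter_mem ht (prod_mem_nhds hs univ_mem))
    exact ⟨q', hq't, hq'D, hq's⟩
  obtain ⟨⟨x, y⟩, ⟨hy, -⟩, rfl⟩ := closure_minimal hlocal hS hq'
  exact ⟨y, hy, rfl⟩

theorem Matrix.isCompact_setOf_abs_apply_le {ι κ : Type*} (C : ℝ) :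
    IsCompact {V : Matrix ι κ ℝ | ∀ i j, |V i j| ≤ C} := by
  have hbox : {V : Matrix ι κ ℝ | ∀ i j, |V i j| ≤ C} =
      univ.pi fun _ => univ.pi fun _ => Icc (-C) C := by
    ext V
    exact ⟨fun h i _ j _ => abs_le.1 (h i j), fun h i j => abs_le.2 (h i trivial j trivial)⟩
  exact hbox ▸ isCompact_univ_pi fun _ => isCompact_univ_pi fun _ => isCompact_Icc

theorem Matrix.abs_mul_apply_le {ι κ ν : Type*} [Fintype κ] [Fintype ν]
    {V : Matrix ι κ ℝ} {C : ℝ} (hV : ∀ i j, |V i j| ≤ C) (B : Matrix κ ν ℝ) (i : ι) (j : ν) :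
    |(V * B) i j| ≤ |C| * ∑ l, ∑ j', |B l j'| := by
  calc |(V * B) i j| ≤ ∑ l, |V i l| * |B l j| := by
        simpa [Matrix.mul_apply, abs_mul] using Finset.abs_sum_le_sum_abs (fun l => V i l * B l j) _
    _ ≤ ∑ l, |C| * ∑ j', |B l j'| := by
        refine Finset.sum_le_sum fun l _ => mul_le_mul ((hV i l).trans (le_abs_self C))
          (Finset.single_le_sum (f := fun j' => |B l j'|) (fun _ _ => abs_nonneg _)
            (Finset.mem_univ j)) (abs_nonneg _) (abs_nonneg _)
    _ = |C| * ∑ l, ∑ j', |B l j'| := by rw [Finset.mul_sum]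

section

variable {X : Type*} [PseudoMetricSpace X] {ι κ : Type*}

def EntrywiseLocallyBounded (D : X → Set (Matrix ι κ ℝ)) : Prop :=
  ∀ x, ∃ ε > (0 : ℝ), ∃ C : ℝ, ∀ y, dist y x < ε → ∀ V ∈ D y, ∀ i j, |V i j| ≤ C

namespace EntrywiseLocallyBounded

variable {D : X → Set (Matrix ι κ ℝ)}

theorem comp (hD : EntrywiseLocallyBounded D) {Y : Type*} [PseudoMetricSpace Y] {A : Y → X}
    (hA : Continuous A) : EntrywiseLocallyBounded fun y => D (A y) := by
  intro y
  obtain ⟨ε, hε, C, hC⟩ := hD (A y)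
  obtain ⟨δ, hδ, hAδ⟩ := Metric.continuous_iff.1 hA y ε hε
  exact ⟨δ, hδ, C, fun y' hy' => hC _ (hAδ y' hy')⟩

theorem image_mul_right [Fintype κ] {ν : Type*} [Fintype ν] (hD : EntrywiseLocallyBounded D)
    (B : Matrix κ ν ℝ) : EntrywiseLocallyBounded fun x => (· * B) '' D x := by
  intro x
  obtain ⟨ε, hε, C, hC⟩ := hD x
  refine ⟨ε, hε, |C| * ∑ k, ∑ l, |B k l|, ?_⟩
  rintro y hy _ ⟨V, hV, rfl⟩
  exact Matrix.abs_mul_apply_le (hC y hy V hV) B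

theorem exists_isCompact (hD : EntrywiseLocallyBounded D) (x : X) :
    ∃ K, IsCompact K ∧ ∀ᶠ y in 𝓝 x, D y ⊆ K := by
  obtain ⟨ε, hε, C, hC⟩ := hD x
  exact ⟨_, Matrix.isCompact_setOf_abs_apply_le C,
    Metric.eventually_nhds_iff.2 ⟨ε, hε, fun y hy V hV => hC y hy V hV⟩⟩

end EntrywiseLocallyBounded

end

section

variable {n d m : ℕ}

def HasChainRuleAlongCurves (D : (Fin d → ℝ) → Set (Matrix (Fin n) (Fin d) ℝ))
    (f : (Fin d → ℝ) → (Fin n → ℝ)) : Prop :=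
  ∀ γ γ' : ℝ → (Fin d → ℝ),
    IntegrableOn γ' (Icc (0 : ℝ) 1) →
    (∀ t ∈ Icc (0 : ℝ) 1, γ t - γ 0 = ∫ s in (0 : ℝ)..t, γ' s) →
    ∀ᵐ t ∂(volume.restrict (Icc (0 : ℝ) 1)),
      ∀ V ∈ D (γ t), HasDerivAt (fun s => f (γ s)) (V.mulVec (γ' t)) t

theorem HasChainRuleAlongCurves.comp_affine {D : (Fin d → ℝ) → Set (Matrix (Fin n) (Fin d) ℝ)}
    {f : (Fin d → ℝ) → (Fin n → ℝ)} (h : HasChainRuleAlongCurves D f) (a : Fin d → ℝ)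
    (B : Matrix (Fin d) (Fin m) ℝ) :
    HasChainRuleAlongCurves (fun y => (· * B) '' D (a + B *ᵥ y)) (fun y => f (a + B *ᵥ y)) := by
  intro γ γ' hint hftc
  set L := LinearMap.toContinuousLinearMap (Matrix.mulVecLin B)
  have hint' : IntegrableOn (fun t => B *ᵥ γ' t) (Icc 0 1) := L.integrable_comp hint
  have hftc' : ∀ t ∈ Icc (0 : ℝ) 1,
      (a + B *ᵥ γ t) - (a + B *ᵥ γ 0) = ∫ s in (0 : ℝ)..t, B *ᵥ γ' s := by
    intro t ht
    have hγ' : IntervalIntegrable γ' volume 0 t :=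
      (intervalIntegrable_iff_integrableOn_Icc_of_le ht.1).2
        (hint.mono_set (Icc_subset_Icc le_rfl ht.2))
    rw [add_sub_add_left_eq_sub, ← Matrix.mulVec_sub, hftc t ht]
    exact (L.intervalIntegral_comp_comm hγ').symm
  filter_upwards [h _ _ hint' hftc'] with t ht
  rintro _ ⟨V, hV, rfl⟩
  simpa only [Matrix.mulVec_mulVec] using ht V hV

theorem IsConservativeJacobian.comp_affine {D : (Fin d → ℝ) → Set (Matrix (Fin n) (Fin d) ℝ)}
    {f : (Fin d → ℝ) → (Fin n → ℝ)} (hD : IsConservativeJacobian D f) (a : Fin d → ℝ)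
    (B : Matrix (Fin d) (Fin m) ℝ) :
    IsConservativeJacobian (fun y => (· * B) '' D (a + B *ᵥ y)) (fun y => f (a + B *ᵥ y)) := by
  obtain ⟨hne, hbdd, hclosed, hchain⟩ := hD
  have hA : Continuous fun y : Fin m → ℝ => a + B *ᵥ y :=
    continuous_const.add (continuous_const.matrix_mulVec continuous_id)
  have hbddA : EntrywiseLocallyBounded fun y => D (a + B *ᵥ y) :=
    EntrywiseLocallyBounded.comp hbdd hA
  exact ⟨fun y => (hne _).image _, hbddA.image_mul_right B,
    isClosed_setOf_mem_image (D := fun y => D (a + B *ᵥ y))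
      (hclosed.preimage (hA.prodMap continuous_id)) hbddA.exists_isCompact
      (continuous_id.matrix_mul continuous_const),
    HasChainRuleAlongCurves.comp_affine hchain a B⟩

end

theorem Fin.append_zero_add_submatrix_one_mulVec {p m : ℕ} (x : Fin p → ℝ) (y : Fin m → ℝ) :
    Fin.append x 0 + (1 : Matrix (Fin (p + m)) (Fin (p + m)) ℝ).submatrix id (Fin.natAdd p) *ᵥ y
      = Fin.append x y := by
  ext k
  refine Fin.addCases (fun i => ?_) (fun i => ?_) k <;>
    simp only [Pi.add_apply, Fin.append_left, Fin.append_right, Matrix.mulVec, dotProduct,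
      Matrix.submatrix_apply, Matrix.one_apply, id, ite_mul, one_mul, zero_mul]
  · rw [Finset.sum_eq_zero fun j _ => if_neg (by simp [Fin.ext_iff]; omega), add_zero]
  · simp

theorem setOf_exists_append_mem_eq_image {n p m : ℕ} (S : Set (Matrix (Fin n) (Fin (p + m)) ℝ)) :
    {M₂ : Matrix (Fin n) (Fin m) ℝ |
      ∃ M₁ : Matrix (Fin n) (Fin p) ℝ, (Matrix.of fun i => Fin.append (M₁ i) (M₂ i)) ∈ S} =
      (fun V => V.submatrix id (Fin.natAdd p)) '' S := by
  ext M₂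
  constructor
  · rintro ⟨M₁, hM⟩
    exact ⟨_, hM, by ext i j; simp [Fin.append_right]⟩
  · rintro ⟨V, hV, rfl⟩
    refine ⟨V.submatrix id (Fin.castAdd m), ?_⟩
    convert hV
    ext i j
    exact congrFun (Fin.append_castAdd_natAdd (f := V i)) j

/-- Projection of a conservative Jacobian: if `J_G` is a conservative Jacobian for
`G : ℝ^{p+m} → ℝ^n`, then for each fixed `x ∈ ℝ^p` the set-valued map
`y ⇉ Π_y J_G(x,y) = {M₂ : ∃ M₁, (M₁ M₂) ∈ J_G(x,y)}` (block notation) is a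
conservative Jacobian for `y ↦ G(x,y)`. -/
theorem projection_isConservativeJacobian {n p m : ℕ}
    (G : (Fin (p + m) → ℝ) → (Fin n → ℝ))
    (JG : (Fin (p + m) → ℝ) → Set (Matrix (Fin n) (Fin (p + m)) ℝ))
    (hJG : IsConservativeJacobian JG G) :
    ∀ x : Fin p → ℝ,
      IsConservativeJacobian
        (fun y => {M₂ : Matrix (Fin n) (Fin m) ℝ |
          ∃ M₁ : Matrix (Fin n) (Fin p) ℝ,
            (Matrix.of fun i => Fin.append (M₁ i) (M₂ i)) ∈ JG (Fin.append x y)})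
        (fun y => G (Fin.append x y)) := by
  intro x
  have h := hJG.comp_affine (Fin.append x 0)
    ((1 : Matrix (Fin (p + m)) (Fin (p + m)) ℝ).submatrix id (Fin.natAdd p))
  simp only [Fin.append_zero_add_submatrix_one_mulVec] at h
  simp only [setOf_exists_append_mem_eq_image]
  convert h using 3 with y V
  exact (Matrix.mul_submatrix_one (Equiv.refl _) _ V).symm
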